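/- arXiv:1908.07925 — 3 statements merged into one kernel-verified Lean document; each statement's English description precedes it below -/
import Mathlib

section
/- Let [A] be an interval matrix with midpoint Ac = I (the identity matrix) and radius Δ = (1/2)(Ā−A̲). Then [A] is strongly semimonotone if and only if ρ(Δ) ≤ 1. -/
open Matrix

/-- Spectral radius of a real square matrix (via its complex spectrum). -/
noncomputable def specRad {n : ℕ} (A : Matrix (Fin n) (Fin n) ℝ) : ℝ :=
  (spectralRadius ℂ (A.map (algebraMap ℝ ℂ))).toReal

/-- `A` is an M-matrix: `A = s•I - N` with `N ≥ 0` and `s > ρ(N)`. -/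
def IsMMatrix {n : ℕ} (A : Matrix (Fin n) (Fin n) ℝ) : Prop :=
  ∃ (s : ℝ) (N : Matrix (Fin n) (Fin n) ℝ),
    (∀ i j, 0 ≤ N i j) ∧ A = s • (1 : Matrix (Fin n) (Fin n) ℝ) - N ∧ specRad N < s

/-- `A` is an M0-matrix: `A = s•I - N` with `N ≥ 0` and `s ≥ ρ(N)`. -/
def IsM0Matrix {n : ℕ} (A : Matrix (Fin n) (Fin n) ℝ) : Prop :=
  ∃ (s : ℝ) (N : Matrix (Fin n) (Fin n) ℝ),
    (∀ i j, 0 ≤ N i j) ∧ A = s • (1 : Matrix (Fin n) (Fin n) ℝ) - N ∧ specRad N ≤ s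

/-- Comparison matrix. -/
def compMatrix {n : ℕ} (A : Matrix (Fin n) (Fin n) ℝ) : Matrix (Fin n) (Fin n) ℝ :=
  fun i j => if i = j then |A i i| else -|A i j|

def IsHMatrix {n : ℕ} (A : Matrix (Fin n) (Fin n) ℝ) : Prop :=
  IsMMatrix (compMatrix A)

def IsSMatrix {n : ℕ} (A : Matrix (Fin n) (Fin n) ℝ) : Prop :=
  ∃ x : Fin n → ℝ, (∀ i, 0 < x i) ∧ (∀ i, 0 < A.mulVec x i)

def Copositive {n : ℕ} (A : Matrix (Fin n) (Fin n) ℝ) : Prop :=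
  ∀ x : Fin n → ℝ, (∀ i, 0 ≤ x i) → 0 ≤ x ⬝ᵥ A.mulVec x

def StrictlyCopositive {n : ℕ} (A : Matrix (Fin n) (Fin n) ℝ) : Prop :=
  ∀ x : Fin n → ℝ, (∀ i, 0 ≤ x i) → x ≠ 0 → 0 < x ⬝ᵥ A.mulVec x

def Semimonotone {n : ℕ} (A : Matrix (Fin n) (Fin n) ℝ) : Prop :=
  ∀ I : Finset (Fin n), I.Nonempty →
    ¬ ∃ x : ↥I → ℝ,
      (∀ i, (A.submatrix ((↑) : ↥I → Fin n) ((↑) : ↥I → Fin n)).mulVec x i < 0) ∧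
      (∀ i, 0 ≤ x i)

def PrincipallyNondegenerate {n : ℕ} (A : Matrix (Fin n) (Fin n) ℝ) : Prop :=
  ∀ I : Finset (Fin n), I.Nonempty →
    (A.submatrix ((↑) : ↥I → Fin n) ((↑) : ↥I → Fin n)).det ≠ 0

/-- A nonnegative matrix is irreducible if `(I + A)^(n-1) > 0` entrywise. -/
def IrreducibleMat {n : ℕ} (A : Matrix (Fin n) (Fin n) ℝ) : Prop :=
  ∀ i j, 0 < ((1 + A) ^ (n - 1)) i j

/-- The block matrix `[[A_II, -A_IJ], [-A_JI, A_JJ]]`. -/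
def csBlock {n : ℕ} (A : Matrix (Fin n) (Fin n) ℝ) (I J : Finset (Fin n)) :
    Matrix (↥I ⊕ ↥J) (↥I ⊕ ↥J) ℝ :=
  Matrix.fromBlocks
    (A.submatrix ((↑) : ↥I → Fin n) ((↑) : ↥I → Fin n))
    (-(A.submatrix ((↑) : ↥I → Fin n) ((↑) : ↥J → Fin n)))
    (-(A.submatrix ((↑) : ↥J → Fin n) ((↑) : ↥I → Fin n)))
    (A.submatrix ((↑) : ↥J → Fin n) ((↑) : ↥J → Fin n))

def ColumnSufficient {n : ℕ} (A : Matrix (Fin n) (Fin n) ℝ) : Prop :=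
  ∀ I J : Finset (Fin n), Disjoint I J → (I ∪ J).Nonempty →
    ¬ ∃ x : (↥I ⊕ ↥J) → ℝ,
      (∀ k, (csBlock A I J).mulVec x k ≤ 0) ∧
      (csBlock A I J).mulVec x ≠ 0 ∧
      (∀ k, 0 < x k)

def IsR0Matrix {n : ℕ} (A : Matrix (Fin n) (Fin n) ℝ) : Prop :=
  ∀ I : Finset (Fin n), I.Nonempty →
    ¬ ∃ x : ↥I → ℝ,
      (∀ i, (A.submatrix ((↑) : ↥I → Fin n) ((↑) : ↥I → Fin n)).mulVec x i = 0) ∧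
      (∀ j : ↥(Iᶜ : Finset (Fin n)),
        0 ≤ (A.submatrix ((↑) : ↥(Iᶜ : Finset (Fin n)) → Fin n) ((↑) : ↥I → Fin n)).mulVec x j) ∧
      (∀ i, 0 < x i)

def IsRMatrix {n : ℕ} (A : Matrix (Fin n) (Fin n) ℝ) : Prop :=
  ∀ I : Finset (Fin n), I.Nonempty →
    ¬ ∃ (x : ↥I → ℝ) (t : ℝ),
      (∀ i, (A.submatrix ((↑) : ↥I → Fin n) ((↑) : ↥I → Fin n)).mulVec x i + t = 0) ∧
      (∀ j : ↥(Iᶜ : Finset (Fin n)),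
        0 ≤ (A.submatrix ((↑) : ↥(Iᶜ : Finset (Fin n)) → Fin n) ((↑) : ↥I → Fin n)).mulVec x j + t) ∧
      (∀ i, 0 < x i) ∧ 0 ≤ t

def PosDefMat {n : ℕ} (A : Matrix (Fin n) (Fin n) ℝ) : Prop :=
  ∀ x : Fin n → ℝ, x ≠ 0 → 0 < x ⬝ᵥ A.mulVec x

def PosSemidefMat {n : ℕ} (A : Matrix (Fin n) (Fin n) ℝ) : Prop :=
  ∀ x : Fin n → ℝ, 0 ≤ x ⬝ᵥ A.mulVec x

/-- Membership of `A` in the interval matrix `[Al, Au]`. -/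
def memInterval {n : ℕ} (Al Au A : Matrix (Fin n) (Fin n) ℝ) : Prop :=
  ∀ i j, Al i j ≤ A i j ∧ A i j ≤ Au i j

/-- The mixed block matrix `[[Al_II, -Au_IJ], [-Au_JI, Al_JJ]]`. -/
def csMixedBlock {n : ℕ} (Al Au : Matrix (Fin n) (Fin n) ℝ) (I J : Finset (Fin n)) :
    Matrix (↥I ⊕ ↥J) (↥I ⊕ ↥J) ℝ :=
  Matrix.fromBlocks
    (Al.submatrix ((↑) : ↥I → Fin n) ((↑) : ↥I → Fin n))
    (-(Au.submatrix ((↑) : ↥I → Fin n) ((↑) : ↥J → Fin n)))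
    (-(Au.submatrix ((↑) : ↥J → Fin n) ((↑) : ↥I → Fin n)))
    (Al.submatrix ((↑) : ↥J → Fin n) ((↑) : ↥J → Fin n))

/-!
Semimonotonicity passes to entrywise larger matrices, so `[A]` is strongly semimonotone iff its
lower end `A̲ = I - Δ` is semimonotone. A matrix `A` fails to be semimonotone exactly when some
nonzero `x ≥ 0` has `(A x)ᵢ < 0` wherever `xᵢ > 0`; for `A = I - Δ` this reads `x < Δ x` on the
support of `x`. Such an `x` exists iff `ρ(Δ) > 1`: the moduli of an eigenvector for an eigenvalue
of modulus `> 1` give one, and conversely `c x ≤ Δ x` with `c > 1` gives `c ^ k ≤ ‖Δ ^ k‖`, so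
`ρ(Δ) ≥ c` by Gelfand's formula.
-/

open Filter Topology

attribute [local instance] Matrix.linftyOpNormedAddCommGroup Matrix.linftyOpNormedRing
  Matrix.linftyOpNormedAlgebra

section MulVec

variable {ι : Type*} [Fintype ι]

theorem Matrix.submatrix_val_mulVec_of_eq_zero {α : Type*} [NonUnitalNonAssocSemiring α]
    (A : Matrix ι ι α) {I : Finset ι} {x : ι → α} (hx : ∀ j ∉ I, x j = 0) (i : I) :
    (A.submatrix ((↑) : I → ι) ((↑) : I → ι) *ᵥ fun j => x j) i = (A *ᵥ x) i := by
  simp only [mulVec, dotProduct, submatrix_apply]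
  rw [Finset.sum_coe_sort I fun j => A i j * x j]
  exact Finset.sum_subset (Finset.subset_univ I) fun j _ hj => by rw [hx j hj, mul_zero]

variable {α : Type*} [Semiring α] [PartialOrder α] [IsOrderedRing α]

theorem Matrix.mulVec_le_mulVec_of_le {A B : Matrix ι ι α} (hAB : ∀ i j, A i j ≤ B i j)
    {x : ι → α} (hx : 0 ≤ x) : A *ᵥ x ≤ B *ᵥ x := fun i =>
  Finset.sum_le_sum fun j _ => mul_le_mul_of_nonneg_right (hAB i j) (hx j)

theorem Matrix.mulVec_mono_of_nonneg {A : Matrix ι ι α} (hA : ∀ i j, 0 ≤ A i j)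
    {x y : ι → α} (hxy : x ≤ y) : A *ᵥ x ≤ A *ᵥ y := fun i =>
  Finset.sum_le_sum fun j _ => mul_le_mul_of_nonneg_left (hxy j) (hA i j)

end MulVec

section Semimonotone

variable {n : ℕ}

theorem not_semimonotone_iff {A : Matrix (Fin n) (Fin n) ℝ} :
    ¬ Semimonotone A ↔ ∃ x : Fin n → ℝ, 0 ≤ x ∧ x ≠ 0 ∧ ∀ i, 0 < x i → (A *ᵥ x) i < 0 := by
  constructor
  · intro h
    simp only [Semimonotone, not_forall, not_not] at h
    obtain ⟨I, ⟨i₀, hi₀⟩, x, hAx, hx⟩ := h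
    set y : Fin n → ℝ := fun i => if h : i ∈ I then x ⟨i, h⟩ else 0
    have hy : ∀ j ∉ I, y j = 0 := fun j hj => dif_neg hj
    have hyx : (fun j : I => y j) = x := funext fun j => dif_pos j.2
    have hAy : ∀ i : I, (A *ᵥ y) i < 0 := fun i => by
      rw [← A.submatrix_val_mulVec_of_eq_zero hy, hyx]; exact hAx i
    refine ⟨y, fun i => ?_, fun hy0 => ?_, fun i hi => ?_⟩
    · by_cases hi : i ∈ I
      · simp only [y, dif_pos hi]; exact hx _
      · rw [hy i hi]; rfl
    · simpa [hy0] using hAy ⟨i₀, hi₀⟩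
    · by_cases hiI : i ∈ I
      · exact hAy ⟨i, hiI⟩
      · simp [hy i hiI] at hi
  · rintro ⟨x, hx, hx0, hAx⟩ hA
    set I := Finset.univ.filter fun i => 0 < x i
    have hxI : ∀ j ∉ I, x j = 0 := fun j hj =>
      le_antisymm (not_lt.1 fun h => hj (by simp [I, h])) (hx j)
    obtain ⟨i₀, hi₀⟩ : ∃ i, x i ≠ 0 := Function.ne_iff.1 hx0
    refine hA I ⟨i₀, Finset.mem_filter.2 ⟨Finset.mem_univ _, (hx i₀).lt_of_ne' hi₀⟩⟩
      ⟨fun j => x j, fun i => ?_, fun i => hx i⟩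
    rw [A.submatrix_val_mulVec_of_eq_zero hxI]
    exact hAx i (Finset.mem_filter.1 i.2).2

theorem Semimonotone.of_le {A B : Matrix (Fin n) (Fin n) ℝ} (hA : Semimonotone A)
    (hAB : ∀ i j, A i j ≤ B i j) : Semimonotone B := by
  contrapose! hA
  obtain ⟨x, hx, hx0, hBx⟩ := not_semimonotone_iff.1 hA
  exact not_semimonotone_iff.2
    ⟨x, hx, hx0, fun i hi => (mulVec_le_mulVec_of_le hAB hx i).trans_lt (hBx i hi)⟩

end Semimonotone

section SpectralRadius

theorem ofReal_le_spectralRadius_of_pow_le_norm_pow {A : Type*} [NormedRing A]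
    [NormedAlgebra ℂ A] [CompleteSpace A] (a : A) {c : ℝ} (hc : 0 ≤ c)
    (h : ∀ k : ℕ, c ^ k ≤ ‖a ^ k‖) : ENNReal.ofReal c ≤ spectralRadius ℂ a := by
  refine ge_of_tendsto (spectrum.pow_norm_pow_one_div_tendsto_nhds_spectralRadius a) ?_
  filter_upwards [eventually_ne_atTop 0] with k hk
  refine ENNReal.ofReal_le_ofReal ?_
  calc c = (c ^ k) ^ (1 / k : ℝ) := by rw [one_div, Real.pow_rpow_inv_natCast hc hk]
    _ ≤ ‖a ^ k‖ ^ (1 / k : ℝ) := Real.rpow_le_rpow (by positivity) (h k) (by positivity)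

theorem exists_lt_nnnorm_of_lt_spectralRadius {𝕜 A : Type*} [NormedField 𝕜] [Ring A]
    [Algebra 𝕜 A] {a : A} {r : NNReal} (h : (r : ENNReal) < spectralRadius 𝕜 a) :
    ∃ μ ∈ spectrum 𝕜 a, r < ‖μ‖₊ := by
  simpa only [spectralRadius, lt_iSup_iff, ENNReal.coe_lt_coe, exists_prop] using h

variable {ι : Type*} [Fintype ι]

theorem pi_norm_le_pi_norm_of_nonneg_of_le {u v : ι → ℝ} (hu : 0 ≤ u) (huv : u ≤ v) :
    ‖u‖ ≤ ‖v‖ :=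
  (pi_norm_le_iff_of_nonneg (norm_nonneg v)).2 fun i => by
    rw [Real.norm_of_nonneg (hu i)]
    exact (huv i).trans ((le_abs_self _).trans (norm_le_pi_norm v i))

theorem Matrix.linfty_opNorm_map_ofReal (M : Matrix ι ι ℝ) :
    ‖M.map (algebraMap ℝ ℂ)‖ = ‖M‖ := by
  simp [linfty_opNorm_def]

variable {Δ : Matrix ι ι ℝ}

theorem norm_smul_le_mulVec_norm (hΔ : ∀ i j, 0 ≤ Δ i j) {v : ι → ℂ} {μ : ℂ}
    (hv : Δ.map (algebraMap ℝ ℂ) *ᵥ v = μ • v) :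
    ‖μ‖ • (fun i => ‖v i‖) ≤ Δ *ᵥ fun i => ‖v i‖ := fun i =>
  calc ‖μ‖ * ‖v i‖ = ‖(Δ.map (algebraMap ℝ ℂ) *ᵥ v) i‖ := by
        rw [hv, Pi.smul_apply, smul_eq_mul, norm_mul]
    _ = ‖∑ j, (Δ i j : ℂ) * v j‖ := rfl
    _ ≤ ∑ j, ‖(Δ i j : ℂ) * v j‖ := norm_sum_le _ _
    _ = (Δ *ᵥ fun i => ‖v i‖) i := by
        simp [mulVec, dotProduct, abs_of_nonneg (hΔ i _)]

theorem exists_one_lt_smul_le_mulVec (hΔ : ∀ i j, 0 ≤ Δ i j) {x : ι → ℝ} (hx : 0 ≤ x)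
    (h : ∀ i, 0 < x i → x i < (Δ *ᵥ x) i) : ∃ c : ℝ, 1 < c ∧ c • x ≤ Δ *ᵥ x := by
  have hev : ∀ᶠ c in 𝓝[>] (1 : ℝ), ∀ i, c * x i ≤ (Δ *ᵥ x) i := by
    refine eventually_all.2 fun i => ?_
    rcases (show 0 ≤ x i from hx i).eq_or_lt with hi | hi
    · refine Eventually.of_forall fun c => ?_
      rw [← hi, mul_zero]
      simpa using mulVec_mono_of_nonneg hΔ hx i
    · have : Tendsto (fun c => c * x i) (𝓝[>] 1) (𝓝 (x i)) := by
        simpa using ((continuous_mul_const (x i)).tendsto 1).mono_left nhdsWithin_le_nhds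
      exact this.eventually (eventually_le_nhds (h i hi))
  obtain ⟨c, hcx, hc⟩ := (hev.and self_mem_nhdsWithin).exists
  exact ⟨c, hc, hcx⟩

variable [DecidableEq ι]

theorem pow_smul_le_pow_mulVec (hΔ : ∀ i j, 0 ≤ Δ i j) {x : ι → ℝ} {c : ℝ} (hc : 0 ≤ c)
    (h : c • x ≤ Δ *ᵥ x) (k : ℕ) : c ^ k • x ≤ (Δ ^ k) *ᵥ x := by
  induction k with
  | zero => simp
  | succ k ih =>
    calc c ^ (k + 1) • x = c ^ k • (c • x) := by rw [pow_succ, mul_smul]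
      _ ≤ c ^ k • (Δ *ᵥ x) := smul_le_smul_of_nonneg_left h (pow_nonneg hc k)
      _ = Δ *ᵥ (c ^ k • x) := (mulVec_smul Δ _ x).symm
      _ ≤ Δ *ᵥ ((Δ ^ k) *ᵥ x) := mulVec_mono_of_nonneg hΔ ih
      _ = (Δ ^ (k + 1)) *ᵥ x := by rw [mulVec_mulVec, ← pow_succ']

theorem pow_le_norm_pow_of_smul_le_mulVec (hΔ : ∀ i j, 0 ≤ Δ i j) {x : ι → ℝ} (hx : 0 ≤ x)
    (hx0 : x ≠ 0) {c : ℝ} (hc : 0 ≤ c) (h : c • x ≤ Δ *ᵥ x) (k : ℕ) : c ^ k ≤ ‖Δ ^ k‖ := by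
  refine le_of_mul_le_mul_right ?_ (norm_pos_iff.2 hx0)
  calc c ^ k * ‖x‖ = ‖c ^ k • x‖ := by rw [norm_smul, Real.norm_of_nonneg (pow_nonneg hc k)]
    _ ≤ ‖(Δ ^ k) *ᵥ x‖ := pi_norm_le_pi_norm_of_nonneg_of_le
        (smul_nonneg (pow_nonneg hc k) hx) (pow_smul_le_pow_mulVec hΔ hc h k)
    _ ≤ ‖Δ ^ k‖ * ‖x‖ := linfty_opNorm_mulVec _ _

theorem Matrix.exists_mulVec_eq_smul_of_mem_spectrum {K : Type*} [Field K] {M : Matrix ι ι K}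
    {μ : K} (h : μ ∈ spectrum K M) : ∃ v ≠ 0, M *ᵥ v = μ • v := by
  rw [← spectrum_toLin', ← Module.End.hasEigenvalue_iff_mem_spectrum] at h
  obtain ⟨v, hv⟩ := h.exists_hasEigenvector
  exact ⟨v, hv.2, by simpa using hv.apply_eq_smul⟩

end SpectralRadius

section SpecRad

variable {n : ℕ} {Δ : Matrix (Fin n) (Fin n) ℝ}

theorem le_specRad_of_smul_le_mulVec (hΔ : ∀ i j, 0 ≤ Δ i j) {x : Fin n → ℝ} (hx : 0 ≤ x)
    (hx0 : x ≠ 0) {c : ℝ} (hc : 0 ≤ c) (h : c • x ≤ Δ *ᵥ x) : c ≤ specRad Δ := by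
  have : Nonempty (Fin n) := (Function.ne_iff.1 hx0).nonempty
  have : CompleteSpace (Matrix (Fin n) (Fin n) ℂ) := FiniteDimensional.complete ℂ _
  have : NormOneClass (Matrix (Fin n) (Fin n) ℂ) := linfty_opNormOneClass
  set a := Δ.map (algebraMap ℝ ℂ)
  have hpow : ∀ k : ℕ, c ^ k ≤ ‖a ^ k‖ := fun k => by
    rw [← Matrix.map_pow, linfty_opNorm_map_ofReal]
    exact pow_le_norm_pow_of_smul_le_mulVec hΔ hx hx0 hc h k
  have hfin : spectralRadius ℂ a ≠ ⊤ :=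
    ((spectrum.spectralRadius_le_nnnorm a).trans_lt ENNReal.coe_lt_top).ne
  exact (ENNReal.ofReal_le_iff_le_toReal hfin).1
    (ofReal_le_spectralRadius_of_pow_le_norm_pow a hc hpow)

theorem one_lt_specRad_iff (hΔ : ∀ i j, 0 ≤ Δ i j) :
    1 < specRad Δ ↔ ∃ x : Fin n → ℝ, 0 ≤ x ∧ x ≠ 0 ∧ ∀ i, 0 < x i → x i < (Δ *ᵥ x) i := by
  constructor
  · intro h
    have hρ : ((1 : NNReal) : ENNReal) < spectralRadius ℂ (Δ.map (algebraMap ℝ ℂ)) := by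
      rw [ENNReal.coe_one, ← ENNReal.ofReal_one, ENNReal.ofReal_lt_iff_lt_toReal zero_le_one]
      · exact h
      · exact ENNReal.toReal_pos_iff.1 (zero_lt_one.trans h) |>.2.ne
    obtain ⟨μ, hμ, hμ1⟩ := exists_lt_nnnorm_of_lt_spectralRadius hρ
    obtain ⟨v, hv0, hv⟩ := exists_mulVec_eq_smul_of_mem_spectrum hμ
    refine ⟨fun i => ‖v i‖, fun i => norm_nonneg _, fun h0 => hv0 ?_, fun i hi => ?_⟩
    · exact funext fun i => norm_eq_zero.1 (congrFun h0 i)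
    · calc ‖v i‖ < ‖μ‖ * ‖v i‖ := lt_mul_of_one_lt_left hi hμ1
        _ ≤ _ := norm_smul_le_mulVec_norm hΔ hv i
  · rintro ⟨x, hx, hx0, hΔx⟩
    obtain ⟨c, hc, hcx⟩ := exists_one_lt_smul_le_mulVec hΔ hx hΔx
    exact hc.trans_le (le_specRad_of_smul_le_mulVec hΔ hx hx0 (zero_le_one.trans hc.le) hcx)

theorem semimonotone_one_sub_iff (hΔ : ∀ i j, 0 ≤ Δ i j) :
    Semimonotone (1 - Δ) ↔ specRad Δ ≤ 1 := by
  rw [← not_iff_not, not_le, not_semimonotone_iff, one_lt_specRad_iff hΔ]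
  simp only [sub_mulVec, one_mulVec, Pi.sub_apply, sub_neg]

end SpecRad

theorem stmt_6 {n : ℕ} (Al Au : Matrix (Fin n) (Fin n) ℝ)
    (hle : ∀ i j, Al i j ≤ Au i j)
    (Ac : Matrix (Fin n) (Fin n) ℝ) (hAc : Ac = (1/2 : ℝ) • (Al + Au)) (Δ : Matrix (Fin n) (Fin n) ℝ) (hΔ : Δ = (1/2 : ℝ) • (Au - Al))
    (hI : Ac = (1 : Matrix (Fin n) (Fin n) ℝ)) :
    (∀ A : Matrix (Fin n) (Fin n) ℝ, memInterval Al Au A → Semimonotone A) ↔ specRad Δ ≤ 1 := by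
  have hΔnn : ∀ i j, 0 ≤ Δ i j := fun i j => by
    simp only [hΔ, Matrix.smul_apply, Matrix.sub_apply, smul_eq_mul]
    linarith [hle i j]
  have hAl : Al = 1 - Δ := by
    rw [hΔ, ← hI, hAc]
    module
  have hstrong : (∀ A, memInterval Al Au A → Semimonotone A) ↔ Semimonotone Al :=
    ⟨fun h => h Al fun i j => ⟨le_rfl, hle i j⟩, fun h A hA => h.of_le fun i j => (hA i j).1⟩
  rw [hstrong, hAl, semimonotone_one_sub_iff hΔnn]
end

section
/- Let [A] be an interval matrix with midpoint Ac = I (the identity matrix) and radius Δ = (1/2)(Ā−A̲). Then [A] is strongly principally nondegenerate if and only if ρ(Δ) < 1. -/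
open Matrix

/-! With `Ac = 1` the interval matrix is `{A | |1 - A| ≤ Δ}`. If a principal submatrix has
`A_II v = 0`, then `v = (1 - A_II) v`, so `|v|`, extended by zero, is a nonzero vector `y ≥ 0`
with `y ≤ Δ y`, hence `y ≤ Δ^k y` for all `k`; this contradicts `ρ(Δ) < 1`, which forces
`Δ^k → 0` by Gelfand's formula. Conversely, if `ρ(Δ) ≥ 1`, the moduli `x` of an eigenvector for
an eigenvalue of modulus `ρ(Δ)` satisfy `0 ≤ x ≤ Δ x`; scaling the rows of `Δ` gives
`0 ≤ B ≤ Δ` with `B x = x`, and `1 - B` is a singular member of the interval. -/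

open Filter Topology

theorem tendsto_pow_atTop_nhds_zero_of_spectralRadius_lt_one {A : Type*} [NormedRing A]
    [NormedAlgebra ℂ A] [CompleteSpace A] {a : A} (h : spectralRadius ℂ a < 1) :
    Tendsto (fun k : ℕ => a ^ k) atTop (𝓝 0) := by
  obtain ⟨r, hρr, hr1⟩ := ENNReal.lt_iff_exists_nnreal_btwn.mp h
  have hbound : ∀ᶠ k : ℕ in atTop, ‖a ^ k‖ ≤ (r : ℝ) ^ k := by
    filter_upwards [(spectrum.pow_nnnorm_pow_one_div_tendsto_nhds_spectralRadius a).eventually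
      (gt_mem_nhds hρr), eventually_gt_atTop 0] with k hk hk0
    rw [one_div, ← ENNReal.coe_rpow_of_nonneg _ (by positivity), ENNReal.coe_lt_coe,
      NNReal.rpow_inv_lt_iff (by positivity), NNReal.rpow_natCast] at hk
    exact_mod_cast hk.le
  exact squeeze_zero_norm' hbound
    (tendsto_pow_atTop_nhds_zero_of_lt_one r.2 (by exact_mod_cast hr1))

namespace Matrix

variable {ι κ : Type*} [Fintype ι] [Fintype κ]

theorem mulVec_mono_of_nonneg_s9 {N : Matrix ι ι ℝ} (hN : ∀ i j, 0 ≤ N i j) {u w : ι → ℝ}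
    (h : u ≤ w) : N *ᵥ u ≤ N *ᵥ w := fun i =>
  Finset.sum_le_sum fun j _ => mul_le_mul_of_nonneg_left (h j) (hN i j)

theorem le_pow_mulVec_of_le_mulVec [DecidableEq ι] {N : Matrix ι ι ℝ} (hN : ∀ i j, 0 ≤ N i j)
    {x : ι → ℝ} (hx : x ≤ N *ᵥ x) (k : ℕ) : x ≤ (N ^ k) *ᵥ x := by
  induction k with
  | zero => simp
  | succ k ih =>
    calc x ≤ (N ^ k) *ᵥ x := ih
      _ ≤ (N ^ k) *ᵥ (N *ᵥ x) := mulVec_mono_of_nonneg_s9 (pow_apply_nonneg hN k) hx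
      _ = (N ^ (k + 1)) *ᵥ x := by rw [mulVec_mulVec, pow_succ]

theorem eq_zero_of_le_submatrix_mulVec {N : Matrix ι ι ℝ} (hN : ∀ i j, 0 ≤ N i j)
    (hsub : ∀ y : ι → ℝ, 0 ≤ y → y ≤ N *ᵥ y → y = 0) {e : κ → ι} (he : e.Injective)
    {y : κ → ℝ} (hy0 : 0 ≤ y) (hy : y ≤ N.submatrix e e *ᵥ y) : y = 0 := by
  classical
  set z : ι → ℝ := Function.extend e y 0
  have hz0 : 0 ≤ z := fun i => by
    by_cases hi : ∃ k, e k = i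
    · obtain ⟨k, rfl⟩ := hi
      simpa [z, he.extend_apply] using hy0 k
    · simp [z, Function.extend_apply' _ _ _ hi]
  have hz : z ≤ N *ᵥ z := fun i => by
    by_cases hi : ∃ k, e k = i
    · obtain ⟨k, rfl⟩ := hi
      calc z (e k) = y k := he.extend_apply _ _ _
        _ ≤ (N.submatrix e e *ᵥ y) k := hy k
        _ = (N *ᵥ z) (e k) := by
          refine Fintype.sum_of_injective e he _ _ (fun i hi => ?_) fun l => ?_
          · simp [z, Function.extend_apply' _ _ _ (by simpa using hi)]
          · simp [z, he.extend_apply]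
    · rw [show z i = 0 by simp [z, Function.extend_apply' _ _ _ hi]]
      exact Finset.sum_nonneg fun j _ => mul_nonneg (hN i j) (hz0 j)
  funext k
  simpa [z, he.extend_apply] using congrFun (hsub z hz0 hz) (e k)

theorem det_ne_zero_of_abs_one_sub_le [DecidableEq ι] {A N : Matrix ι ι ℝ}
    (hA : ∀ i j, |(1 - A) i j| ≤ N i j)
    (hsub : ∀ y : ι → ℝ, 0 ≤ y → y ≤ N *ᵥ y → y = 0) : A.det ≠ 0 := by
  intro hdet
  obtain ⟨v, hv0, hAv⟩ := exists_mulVec_eq_zero_iff.mpr hdet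
  have hv : (1 - A) *ᵥ v = v := by rw [sub_mulVec, hAv, one_mulVec, sub_zero]
  have hle : (fun i => |v i|) ≤ N *ᵥ fun i => |v i| := fun i =>
    calc |v i| = |∑ j, (1 - A) i j * v j| := by rw [← congrFun hv i]; rfl
      _ ≤ ∑ j, |(1 - A) i j| * |v j| := by
        simpa only [abs_mul] using
          Finset.abs_sum_le_sum_abs (fun j => (1 - A) i j * v j) Finset.univ
      _ ≤ ∑ j, N i j * |v j| :=
        Finset.sum_le_sum fun j _ => mul_le_mul_of_nonneg_right (hA i j) (abs_nonneg _)
  have habs := hsub _ (fun i => abs_nonneg (v i)) hle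
  exact hv0 (funext fun i => abs_eq_zero.mp (congrFun habs i))

-- `B` scales row `i` of `N` by `x i / (N x) i ∈ [0, 1]`.
theorem exists_mulVec_eq_self_of_le_mulVec {N : Matrix ι ι ℝ} (hN : ∀ i j, 0 ≤ N i j)
    {x : ι → ℝ} (hx0 : 0 ≤ x) (hx : x ≤ N *ᵥ x) :
    ∃ B : Matrix ι ι ℝ, (∀ i j, 0 ≤ B i j ∧ B i j ≤ N i j) ∧ B *ᵥ x = x := by
  classical
  have hNx0 : 0 ≤ N *ᵥ x := by simpa using mulVec_mono_of_nonneg_s9 hN hx0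
  set t : ι → ℝ := fun i => x i / (N *ᵥ x) i
  refine ⟨diagonal t * N, fun i j => ?_, funext fun i => ?_⟩
  · have ht0 : 0 ≤ t i := div_nonneg (hx0 i) (hNx0 i)
    have ht1 : t i ≤ 1 := div_le_one_of_le₀ (hx i) (hNx0 i)
    rw [diagonal_mul]
    exact ⟨mul_nonneg ht0 (hN i j), mul_le_of_le_one_left (hN i j) ht1⟩
  · rw [← mulVec_mulVec, mulVec_diagonal]
    exact div_mul_cancel_of_imp fun h => le_antisymm (h ▸ hx i) (hx0 i)

end Matrix

section SpecRad

attribute [local instance] Matrix.linftyOpNormedAddCommGroup Matrix.linftyOpNormedRing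
  Matrix.linftyOpNormedAlgebra

variable {n : ℕ}

theorem spectralRadius_map_lt_one_of_specRad_lt_one {D : Matrix (Fin n) (Fin n) ℝ}
    (h : specRad D < 1) : spectralRadius ℂ (D.map (algebraMap ℝ ℂ)) < 1 := by
  have hfin : spectralRadius ℂ (D.map (algebraMap ℝ ℂ)) ≠ ⊤ := by
    refine ((spectrum.spectralRadius_le_pow_nnnorm_pow_one_div ℂ _ 0).trans_lt ?_).ne
    simp [ENNReal.mul_lt_top]
  simpa using (ENNReal.lt_ofReal_iff_toReal_lt hfin).mpr h

theorem tendsto_pow_apply_of_specRad_lt_one {D : Matrix (Fin n) (Fin n) ℝ} (h : specRad D < 1)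
    (i j : Fin n) : Tendsto (fun k : ℕ => (D ^ k) i j) atTop (𝓝 0) := by
  have hM := ((continuous_apply_apply i j).tendsto 0).comp
    (tendsto_pow_atTop_nhds_zero_of_spectralRadius_lt_one
      (spectralRadius_map_lt_one_of_specRad_lt_one h))
  refine ((Complex.continuous_re.tendsto 0).comp hM).congr fun k => ?_
  change ((D.map (algebraMap ℝ ℂ) ^ k) i j).re = _
  rw [← Matrix.map_pow, Matrix.map_apply, Complex.coe_algebraMap, Complex.ofReal_re]

theorem eq_zero_of_le_mulVec_of_specRad_lt_one {D : Matrix (Fin n) (Fin n) ℝ}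
    (hD : ∀ i j, 0 ≤ D i j) (h : specRad D < 1) {y : Fin n → ℝ} (hy0 : 0 ≤ y)
    (hy : y ≤ D *ᵥ y) : y = 0 := by
  funext i
  have hlim : Tendsto (fun k : ℕ => ((D ^ k) *ᵥ y) i) atTop (𝓝 0) := by
    simpa [mulVec, dotProduct] using tendsto_finsetSum Finset.univ fun j _ =>
      (tendsto_pow_apply_of_specRad_lt_one h i j).mul_const (y j)
  exact le_antisymm (ge_of_tendsto' hlim fun k => le_pow_mulVec_of_le_mulVec hD hy k i)
    (hy0 i)

theorem exists_eigenvalue_one_le_norm_of_one_le_specRad {D : Matrix (Fin n) (Fin n) ℝ}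
    (h : 1 ≤ specRad D) :
    ∃ μ : ℂ, 1 ≤ ‖μ‖ ∧
      ∃ v : Fin n → ℂ, v ≠ 0 ∧ D.map (algebraMap ℝ ℂ) *ᵥ v = μ • v := by
  obtain hempty | hne := (spectrum ℂ (D.map (algebraMap ℝ ℂ))).eq_empty_or_nonempty
  · rw [specRad, spectralRadius, hempty] at h
    simp at h
    linarith
  obtain ⟨μ, hμ, hμρ⟩ := spectrum.exists_nnnorm_eq_spectralRadius_of_nonempty hne
  refine ⟨μ, ?_, ?_⟩
  · rwa [specRad, ← hμρ, ENNReal.coe_toReal, coe_nnnorm] at h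
  rw [spectrum.mem_iff, Matrix.isUnit_iff_isUnit_det, isUnit_iff_ne_zero, not_not,
    ← exists_mulVec_eq_zero_iff] at hμ
  obtain ⟨v, hv0, hv⟩ := hμ
  refine ⟨v, hv0, ?_⟩
  rwa [sub_mulVec, Algebra.algebraMap_eq_smul_one, Matrix.smul_mulVec,
    one_mulVec, sub_eq_zero, eq_comm] at hv

theorem exists_le_mulVec_of_one_le_specRad {D : Matrix (Fin n) (Fin n) ℝ}
    (hD : ∀ i j, 0 ≤ D i j) (h : 1 ≤ specRad D) :
    ∃ x : Fin n → ℝ, 0 ≤ x ∧ x ≠ 0 ∧ x ≤ D *ᵥ x := by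
  obtain ⟨μ, hμ, v, hv0, hv⟩ := exists_eigenvalue_one_le_norm_of_one_le_specRad h
  refine ⟨fun i => ‖v i‖, fun i => norm_nonneg _, fun hx => hv0 (funext fun i => ?_),
    fun i => ?_⟩
  · simpa using congrFun hx i
  calc ‖v i‖ ≤ ‖μ‖ * ‖v i‖ := le_mul_of_one_le_left (norm_nonneg _) hμ
    _ = ‖∑ j, (D i j : ℂ) * v j‖ := by
      rw [← norm_mul, ← smul_eq_mul, ← Pi.smul_apply μ v i, ← hv]
      simp [mulVec, dotProduct]
    _ ≤ ∑ j, D i j * ‖v j‖ := by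
      refine (norm_sum_le _ _).trans_eq (Finset.sum_congr rfl fun j _ => ?_)
      rw [norm_mul, Complex.norm_real, Real.norm_of_nonneg (hD i j)]

end SpecRad

theorem memInterval_one_sub_one_add_iff {n : ℕ} {Δ A : Matrix (Fin n) (Fin n) ℝ} :
    memInterval (1 - Δ) (1 + Δ) A ↔ ∀ i j, |(1 - A) i j| ≤ Δ i j := by
  refine forall₂_congr fun i j => ?_
  simp only [Matrix.sub_apply, Matrix.add_apply, abs_le]
  constructor <;> rintro ⟨h₁, h₂⟩ <;> constructor <;> linarith

theorem PrincipallyNondegenerate.det_ne_zero {n : ℕ} [NeZero n] {A : Matrix (Fin n) (Fin n) ℝ}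
    (h : PrincipallyNondegenerate A) : A.det ≠ 0 := by
  have := h Finset.univ Finset.univ_nonempty
  rwa [show A.submatrix ((↑) : ↥(Finset.univ : Finset (Fin n)) → Fin n) (↑) =
      A.submatrix (Equiv.subtypeUnivEquiv Finset.mem_univ) (Equiv.subtypeUnivEquiv Finset.mem_univ)
    from rfl, det_submatrix_equiv_self] at this

theorem principallyNondegenerate_of_abs_one_sub_le {n : ℕ} {A Δ : Matrix (Fin n) (Fin n) ℝ}
    (hA : ∀ i j, |(1 - A) i j| ≤ Δ i j) (hρ : specRad Δ < 1) :
    PrincipallyNondegenerate A := by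
  have hΔ : ∀ i j, 0 ≤ Δ i j := fun i j => (abs_nonneg _).trans (hA i j)
  intro I _
  refine det_ne_zero_of_abs_one_sub_le (N := Δ.submatrix (↑) (↑)) (fun i j => ?_)
    fun y hy0 hy => eq_zero_of_le_submatrix_mulVec hΔ
      (fun _ => eq_zero_of_le_mulVec_of_specRad_lt_one hΔ hρ) Subtype.val_injective hy0 hy
  rw [← submatrix_one _ Subtype.val_injective]
  exact hA i j

theorem stmt_9 {n : ℕ} (Al Au : Matrix (Fin n) (Fin n) ℝ)
    (hle : ∀ i j, Al i j ≤ Au i j)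
    (Ac : Matrix (Fin n) (Fin n) ℝ) (hAc : Ac = (1/2 : ℝ) • (Al + Au)) (Δ : Matrix (Fin n) (Fin n) ℝ) (hΔ : Δ = (1/2 : ℝ) • (Au - Al))
    (hI : Ac = (1 : Matrix (Fin n) (Fin n) ℝ)) :
    (∀ A : Matrix (Fin n) (Fin n) ℝ, memInterval Al Au A → PrincipallyNondegenerate A) ↔ specRad Δ < 1 := by
  have hΔ0 : ∀ i j, 0 ≤ Δ i j := fun i j => by
    simpa [hΔ] using hle i j
  have hAl : Al = 1 - Δ := by
    rw [← hI, hAc, hΔ]; module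
  have hAu : Au = 1 + Δ := by
    rw [← hI, hAc, hΔ]; module
  simp only [hAl, hAu, memInterval_one_sub_one_add_iff]
  refine ⟨fun H => ?_, fun hρ A hA => principallyNondegenerate_of_abs_one_sub_le hA hρ⟩
  by_contra! hρ
  obtain ⟨x, hx0, hx_ne, hx⟩ := exists_le_mulVec_of_one_le_specRad hΔ0 hρ
  obtain ⟨B, hB, hBx⟩ := exists_mulVec_eq_self_of_le_mulVec hΔ0 hx0 hx
  have : NeZero n := ⟨by rintro rfl; exact hx_ne (Subsingleton.elim _ _)⟩
  refine (H (1 - B) fun i j => ?_).det_ne_zero ?_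
  · simpa [abs_of_nonneg (hB i j).1] using (hB i j).2
  · exact exists_mulVec_eq_zero_iff.mp ⟨x, hx_ne, by simp [sub_mulVec, hBx]⟩
end

section
/- Let [A] be an interval matrix with midpoint Ac = (1/2)(A̲+Ā) and radius Δ = (1/2)(Ā−A̲). Suppose Ac is an M-matrix and Δ is irreducible. Then [A] is strongly column sufficient if and only if A̲ is an M0-matrix. -/
/-!
Write `Ac = s • 1 - N₀` with `N₀ ≥ 0`, `ρ(N₀) < s`; then `A̲ = s • 1 - (N₀ + Δ)`, and every
off-diagonal entry of any `A ∈ [A]` satisfies `|A i j| ≤ -A̲ i j`. Irreducibility passes from `Δ`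
to every `N ≥ 0` with `A̲ = s' • 1 - N`, because off the diagonal `N ≥ Δ`.

If `ρ(N₀ + Δ) > s`, the Perron–Frobenius argument (a maximal-modulus eigenvector, made positive
by `(1 + N) ^ (n - 1)`) gives `y > 0` with `A̲ y < 0`, so `A̲ ∈ [A]` is not column sufficient.
Conversely, the sign-flipped blocks defining column sufficiency of `A` dominate `A̲` entrywise, so
a violating `x > 0` spreads to `w ≥ 0` with `A̲ w ≤ 0`, `A̲ w ≠ 0`, i.e. `s' w ≤ N w` with a strict
coordinate; for irreducible `N`, multiplying by `(1 + N) ^ (n - 1)` makes this strict everywhere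
on a positive vector, and Gelfand's formula turns `r y ≤ N y`, `y > 0` into `‖N ^ m‖ ≥ c r ^ m`,
hence `s' < ρ(N)`.
-/

open Matrix

open Filter Topology

section NonnegMatrix

variable {ι : Type*} [Fintype ι]

lemma mulVec_apply_nonneg {M : Matrix ι ι ℝ} {v : ι → ℝ}
    (hM : ∀ i j, 0 ≤ M i j) (hv : ∀ i, 0 ≤ v i) (i : ι) : 0 ≤ (M *ᵥ v) i :=
  Finset.sum_nonneg fun j _ => mul_nonneg (hM i j) (hv j)

lemma mulVec_apply_le_mulVec_apply {M : Matrix ι ι ℝ} {v w : ι → ℝ}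
    (hM : ∀ i j, 0 ≤ M i j) (hvw : ∀ i, v i ≤ w i) (i : ι) : (M *ᵥ v) i ≤ (M *ᵥ w) i :=
  Finset.sum_le_sum fun j _ => mul_le_mul_of_nonneg_left (hvw j) (hM i j)

lemma mulVec_apply_pos {P : Matrix ι ι ℝ} {v : ι → ℝ}
    (hP : ∀ i j, 0 < P i j) (hv : ∀ i, 0 ≤ v i) (hv0 : v ≠ 0) (i : ι) : 0 < (P *ᵥ v) i := by
  obtain ⟨j, hj⟩ := Function.ne_iff.mp hv0
  exact Finset.sum_pos' (fun k _ => mul_nonneg (hP i k).le (hv k))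
    ⟨j, Finset.mem_univ j, mul_pos (hP i j) ((hv j).lt_of_ne' hj)⟩

lemma pow_apply_le_pow_apply [DecidableEq ι] {P Q : Matrix ι ι ℝ} (hQ : ∀ i j, 0 ≤ Q i j)
    (hQP : ∀ i j, Q i j ≤ P i j) (k : ℕ) (i j : ι) : (Q ^ k) i j ≤ (P ^ k) i j := by
  induction k generalizing j with
  | zero => rfl
  | succ k ih =>
    rw [pow_succ, pow_succ, Matrix.mul_apply, Matrix.mul_apply]
    exact Finset.sum_le_sum fun l _ =>
      mul_le_mul (ih l) (hQP l j) (hQ l j) ((pow_apply_nonneg hQ k i l).trans (ih l))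

lemma pow_mul_le_pow_mulVec [DecidableEq ι] {M : Matrix ι ι ℝ} (hM : ∀ i j, 0 ≤ M i j)
    {y : ι → ℝ} {r : ℝ} (hr : 0 ≤ r) (hy : ∀ i, r * y i ≤ (M *ᵥ y) i) (m : ℕ) (i : ι) :
    r ^ m * y i ≤ (M ^ m *ᵥ y) i := by
  induction m generalizing i with
  | zero => simp
  | succ m ih =>
    calc r ^ (m + 1) * y i = r ^ m * (r * y i) := by ring
      _ ≤ r ^ m * (M *ᵥ y) i := mul_le_mul_of_nonneg_left (hy i) (pow_nonneg hr m)
      _ = (M *ᵥ (r ^ m • y)) i := by simp [Matrix.mulVec_smul]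
      _ ≤ (M *ᵥ (M ^ m *ᵥ y)) i := mulVec_apply_le_mulVec_apply hM (fun j => ih j) i
      _ = (M ^ (m + 1) *ᵥ y) i := by rw [Matrix.mulVec_mulVec, ← pow_succ']

lemma mulVec_mulVec_apply_sub_of_commute {M P : Matrix ι ι ℝ} (h : Commute M P) (r : ℝ)
    (u : ι → ℝ) (i : ι) :
    (M *ᵥ (P *ᵥ u)) i - r * (P *ᵥ u) i = (P *ᵥ (M *ᵥ u - r • u)) i := by
  rw [Matrix.mulVec_sub, Matrix.mulVec_smul, Matrix.mulVec_mulVec, Matrix.mulVec_mulVec, h.eq]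
  rfl

lemma smul_one_sub_mulVec_apply [DecidableEq ι] (N : Matrix ι ι ℝ) (s : ℝ) (v : ι → ℝ) (i : ι) :
    ((s • (1 : Matrix ι ι ℝ) - N) *ᵥ v) i = s * v i - (N *ᵥ v) i := by
  simp [Matrix.sub_mulVec, Matrix.smul_mulVec]

end NonnegMatrix

lemma smul_one_sub_apply_of_ne {ι : Type*} [DecidableEq ι] {N : Matrix ι ι ℝ} (s : ℝ) {i j : ι}
    (h : i ≠ j) : (s • (1 : Matrix ι ι ℝ) - N) i j = -N i j := by
  simp [Matrix.one_apply_ne h]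

section

variable {n : ℕ}

lemma IrreducibleMat.mono {Δ N : Matrix (Fin n) (Fin n) ℝ} (h : IrreducibleMat Δ)
    (hΔ : ∀ i j, 0 ≤ Δ i j) (hN : ∀ i, 0 ≤ N i i) (hΔN : ∀ i j, i ≠ j → Δ i j ≤ N i j) :
    IrreducibleMat N := by
  -- `c • (1 + Δ)` lies entrywise between `0` and `1 + N`, and its powers are positive multiples
  -- of those of `1 + Δ`.
  set c : ℝ := (1 + Δ.trace)⁻¹
  have htr : 0 ≤ Δ.trace := Finset.sum_nonneg fun i _ => hΔ i i
  have hc : 0 < c := by positivity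
  have hc1 : c ≤ 1 := inv_le_one_of_one_le₀ (by linarith)
  have hQ : ∀ i j, 0 ≤ (c • (1 + Δ)) i j := fun i j => by
    rcases eq_or_ne i j with rfl | hij
    · simp only [Matrix.smul_apply, Matrix.add_apply, Matrix.one_apply_eq, smul_eq_mul]
      exact mul_nonneg hc.le (by linarith [hΔ i i])
    · simpa [Matrix.one_apply_ne hij] using mul_nonneg hc.le (hΔ i j)
  have hQN : ∀ i j, (c • (1 + Δ)) i j ≤ (1 + N) i j := fun i j => by
    rcases eq_or_ne i j with rfl | hij
    · have hii : Δ i i ≤ Δ.trace :=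
        Finset.single_le_sum (fun k _ => hΔ k k) (Finset.mem_univ i)
      have : c * (1 + Δ i i) ≤ 1 := by
        rw [inv_mul_le_iff₀ (by positivity)]; linarith
      simp only [Matrix.smul_apply, Matrix.add_apply, Matrix.one_apply_eq, smul_eq_mul]
      linarith [hN i]
    · simp only [Matrix.smul_apply, Matrix.add_apply, Matrix.one_apply_ne hij, smul_eq_mul,
        zero_add]
      nlinarith [hΔ i j, hΔN i j hij]
  intro i j
  calc 0 < c ^ (n - 1) * ((1 + Δ) ^ (n - 1)) i j := mul_pos (pow_pos hc _) (h i j)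
    _ = ((c • (1 + Δ)) ^ (n - 1)) i j := by rw [smul_pow, Matrix.smul_apply, smul_eq_mul]
    _ ≤ ((1 + N) ^ (n - 1)) i j := pow_apply_le_pow_apply hQ hQN _ i j

section SpectralRadius

attribute [local instance] Matrix.linftyOpSeminormedAddCommGroup Matrix.linftyOpNormedRing
  Matrix.linftyOpNormedAlgebra

lemma Matrix.sum_norm_apply_le_linfty_opNorm {m k α : Type*} [Fintype m] [Fintype k]
    [SeminormedAddCommGroup α] (A : Matrix m k α) (i : m) : ∑ j, ‖A i j‖ ≤ ‖A‖ := by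
  rw [Matrix.linfty_opNorm_def]
  simpa [← coe_nnnorm] using NNReal.coe_le_coe.2
    (Finset.le_sup (f := fun i => ∑ j, ‖A i j‖₊) (Finset.mem_univ i))

lemma specRad_nonneg (M : Matrix (Fin n) (Fin n) ℝ) : 0 ≤ specRad M :=
  ENNReal.toReal_nonneg

lemma exists_eigenvector_norm_eq_specRad [NeZero n] (M : Matrix (Fin n) (Fin n) ℝ) :
    ∃ (μ : ℂ) (v : Fin n → ℂ), v ≠ 0 ∧ M.map (algebraMap ℝ ℂ) *ᵥ v = μ • v ∧ ‖μ‖ = specRad M := by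
  obtain ⟨μ, hμ, hρ⟩ := spectrum.exists_nnnorm_eq_spectralRadius (M.map (algebraMap ℝ ℂ))
  rw [← Matrix.spectrum_toLin', ← Module.End.hasEigenvalue_iff_mem_spectrum] at hμ
  obtain ⟨v, hv⟩ := hμ.exists_hasEigenvector
  refine ⟨μ, v, hv.2, ?_, ?_⟩
  · simpa using hv.apply_eq_smul
  · rw [specRad, ← hρ]; rfl

lemma le_specRad_of_mul_pow_le_norm [NeZero n] {M : Matrix (Fin n) (Fin n) ℝ} {c r : ℝ}
    (hc : 0 < c) (hr : 0 ≤ r) (h : ∀ m : ℕ, c * r ^ m ≤ ‖M.map (algebraMap ℝ ℂ) ^ m‖) :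
    r ≤ specRad M := by
  set B := M.map (algebraMap ℝ ℂ)
  have hfin : spectralRadius ℂ B ≠ ⊤ :=
    ((spectrum.spectralRadius_le_nnnorm B).trans_lt ENNReal.coe_lt_top).ne
  have hlow : Tendsto (fun m : ℕ => ENNReal.ofReal (c ^ (1 / (m : ℝ)) * r)) atTop
      (𝓝 (ENNReal.ofReal r)) := by
    have : Tendsto (fun m : ℕ => c ^ (1 / (m : ℝ))) atTop (𝓝 1) := by
      simpa [Function.comp_def] using ((Real.continuousAt_const_rpow hc.ne').tendsto.comp
        tendsto_one_div_atTop_nhds_zero_nat)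
    simpa [Function.comp_def] using (ENNReal.continuous_ofReal.tendsto _).comp (this.mul_const r)
  have hle := le_of_tendsto_of_tendsto hlow
    (spectrum.pow_norm_pow_one_div_tendsto_nhds_spectralRadius B) <| by
      filter_upwards [eventually_ne_atTop 0] with m hm
      refine ENNReal.ofReal_le_ofReal ?_
      calc c ^ (1 / (m : ℝ)) * r = (c * r ^ m) ^ (1 / (m : ℝ)) := by
            rw [Real.mul_rpow hc.le (pow_nonneg hr m), one_div,
              Real.pow_rpow_inv_natCast hr hm]
        _ ≤ ‖B ^ m‖ ^ (1 / (m : ℝ)) :=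
            Real.rpow_le_rpow (mul_nonneg hc.le (pow_nonneg hr m)) (h m) (by positivity)
  rwa [ENNReal.ofReal_le_iff_le_toReal hfin] at hle

lemma le_specRad_of_le_mulVec [NeZero n] {M : Matrix (Fin n) (Fin n) ℝ} (hM : ∀ i j, 0 ≤ M i j)
    {y : Fin n → ℝ} (hy : ∀ i, 0 < y i) {r : ℝ} (hr : ∀ i, r * y i ≤ (M *ᵥ y) i) :
    r ≤ specRad M := by
  rcases le_or_gt r 0 with hr0 | hr0
  · exact hr0.trans (specRad_nonneg M)
  -- Row `0` of `M ^ m` has sum at least `c * r ^ m`, where `c = y 0 / ∑ j, y j`.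
  set S := ∑ j, y j
  have hyS : ∀ j, y j ≤ S := fun j =>
    Finset.single_le_sum (fun k _ => (hy k).le) (Finset.mem_univ j)
  have hS : 0 < S := (hy 0).trans_le (hyS 0)
  refine le_specRad_of_mul_pow_le_norm (c := y 0 / S) (div_pos (hy 0) hS) hr0.le fun m => ?_
  calc y 0 / S * r ^ m ≤ (M ^ m *ᵥ y) 0 / S := by
        rw [div_mul_eq_mul_div, mul_comm]
        exact div_le_div_of_nonneg_right (pow_mul_le_pow_mulVec hM hr0.le hr m 0) hS.le
    _ ≤ ∑ j, (M ^ m) 0 j := by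
        rw [div_le_iff₀ hS, Finset.sum_mul, Matrix.mulVec, dotProduct]
        exact Finset.sum_le_sum fun j _ =>
          mul_le_mul_of_nonneg_left (hyS j) (pow_apply_nonneg hM m 0 j)
    _ = ∑ j, ‖(M.map (algebraMap ℝ ℂ) ^ m) 0 j‖ := by
        refine Finset.sum_congr rfl fun j _ => ?_
        rw [← Matrix.map_pow, Matrix.map_apply, norm_algebraMap',
          Real.norm_of_nonneg (pow_apply_nonneg hM m 0 j)]
    _ ≤ ‖M.map (algebraMap ℝ ℂ) ^ m‖ := Matrix.sum_norm_apply_le_linfty_opNorm _ 0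

end SpectralRadius

lemma exists_gt_forall_mul_lt {ι : Type*} [Finite ι] {s : ℝ} {y z : ι → ℝ}
    (h : ∀ i, s * y i < z i) : ∃ r, s < r ∧ ∀ i, r * y i < z i :=
  (eventually_all.2 fun i =>
    (continuous_id.mul continuous_const).continuousAt.eventually_lt continuousAt_const
      (h i)).exists_gt

lemma commute_self_one_add_pow {R : Type*} [Semiring R] (a : R) (k : ℕ) :
    Commute a ((1 + a) ^ k) :=
  ((Commute.one_right a).add_right (Commute.refl a)).pow_right k

namespace IrreducibleMat

variable {M : Matrix (Fin n) (Fin n) ℝ}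

lemma exists_pos_lt_mulVec_of_lt_specRad [NeZero n] (hirr : IrreducibleMat M)
    (hM : ∀ i j, 0 ≤ M i j) {s : ℝ} (hs : s < specRad M) :
    ∃ y : Fin n → ℝ, (∀ i, 0 < y i) ∧ ∀ i, s * y i < (M *ᵥ y) i := by
  obtain ⟨μ, v, hv0, hv, hμ⟩ := exists_eigenvector_norm_eq_specRad M
  -- `|v|` is subinvariant by the triangle inequality, and `(1 + M) ^ (n - 1)` makes it positive.
  set u : Fin n → ℝ := fun i => ‖v i‖
  have hu : ∀ i, 0 ≤ u i := fun i => norm_nonneg _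
  have hu0 : u ≠ 0 := fun h => hv0 (funext fun i => norm_eq_zero.mp (congrFun h i))
  have hsub : ∀ i, 0 ≤ (M *ᵥ u - specRad M • u) i := fun i => sub_nonneg.2 <|
    calc specRad M * u i = ‖(M.map (algebraMap ℝ ℂ) *ᵥ v) i‖ := by
          rw [hv, Pi.smul_apply, smul_eq_mul, norm_mul, hμ]
      _ ≤ (M *ᵥ u) i := by
          simp only [Matrix.mulVec, dotProduct]
          refine (norm_sum_le _ _).trans_eq (Finset.sum_congr rfl fun j _ => ?_)
          rw [norm_mul, Matrix.map_apply, norm_algebraMap', Real.norm_of_nonneg (hM i j)]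
  have hPu := mulVec_apply_pos hirr hu hu0
  refine ⟨(1 + M) ^ (n - 1) *ᵥ u, hPu, fun i => ?_⟩
  have hle := mulVec_apply_nonneg (fun i j => (hirr i j).le) hsub i
  rw [← mulVec_mulVec_apply_sub_of_commute (commute_self_one_add_pow M _), sub_nonneg] at hle
  exact (mul_lt_mul_of_pos_right hs (hPu i)).trans_le hle

lemma lt_specRad_of_le_mulVec (hirr : IrreducibleMat M) (hM : ∀ i j, 0 ≤ M i j)
    {u : Fin n → ℝ} (hu : ∀ i, 0 ≤ u i) {s : ℝ} (hle : ∀ i, s * u i ≤ (M *ᵥ u) i)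
    (hlt : ∃ i, s * u i < (M *ᵥ u) i) : s < specRad M := by
  obtain ⟨i₀, hi₀⟩ := hlt
  have : NeZero n := ⟨fun h => (h ▸ i₀).elim0⟩
  have hu0 : u ≠ 0 := by rintro rfl; simp at hi₀
  have hd : ∀ i, 0 ≤ (M *ᵥ u - s • u) i := fun i => sub_nonneg.2 (hle i)
  have hd0 : M *ᵥ u - s • u ≠ 0 := fun h => (sub_pos.2 hi₀).ne' (congrFun h i₀)
  -- `(1 + M) ^ (n - 1)` turns the nonnegative, nonzero defect `M *ᵥ u - s • u` into a positive one.
  have hPu := mulVec_apply_pos hirr hu hu0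
  have hstrict : ∀ i, s * ((1 + M) ^ (n - 1) *ᵥ u) i < (M *ᵥ ((1 + M) ^ (n - 1) *ᵥ u)) i :=
    fun i => by
      have := mulVec_apply_pos hirr hd hd0 i
      rwa [← mulVec_mulVec_apply_sub_of_commute (commute_self_one_add_pow M _), sub_pos] at this
  obtain ⟨r, hsr, hr⟩ := exists_gt_forall_mul_lt hstrict
  exact hsr.trans_le (le_specRad_of_le_mulVec hM hPu fun i => (hr i).le)

end IrreducibleMat

lemma not_columnSufficient_of_mulVec_nonpos {A : Matrix (Fin n) (Fin n) ℝ} {y : Fin n → ℝ}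
    (hy : ∀ i, 0 < y i) (hAy : ∀ i, (A *ᵥ y) i ≤ 0) (hAy0 : A *ᵥ y ≠ 0) :
    ¬ ColumnSufficient A := by
  obtain ⟨i₀, hi₀⟩ := Function.ne_iff.mp hAy0
  have hblock : ∀ i : (Finset.univ : Finset (Fin n)),
      (csBlock A Finset.univ ∅ *ᵥ Sum.elim (fun i => y i) 1) (Sum.inl i) = (A *ᵥ y) i := by
    intro i
    simp [csBlock, Matrix.mulVec, dotProduct, Fintype.sum_sum_type]
  refine fun hA => hA Finset.univ ∅ (Finset.disjoint_empty_right _) ⟨i₀, by simp⟩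
    ⟨Sum.elim (fun i => y i) 1, ?_, ?_, ?_⟩
  · rintro (i | ⟨_, h⟩)
    · exact (hblock i).trans_le (hAy i)
    · simp at h
  · exact fun h => hi₀ ((hblock ⟨i₀, Finset.mem_univ _⟩).symm.trans (congrFun h _))
  · rintro (i | _)
    · exact hy i
    · exact one_pos

lemma exists_nonneg_mulVec_nonpos_of_not_columnSufficient {L A : Matrix (Fin n) (Fin n) ℝ}
    (hLA : ∀ i j, L i j ≤ A i j) (hAL : ∀ i j, i ≠ j → A i j ≤ -L i j)
    (hA : ¬ ColumnSufficient A) :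
    ∃ w : Fin n → ℝ, (∀ i, 0 ≤ w i) ∧ (∀ i, (L *ᵥ w) i ≤ 0) ∧ ∃ i, (L *ᵥ w) i < 0 := by
  simp only [ColumnSufficient, not_forall, not_not] at hA
  obtain ⟨I, J, hIJ, -, x, hx, hx0, hxpos⟩ := hA
  -- Spread `x` over `Fin n` along `e`; the sign flips in `csBlock` only touch entries
  -- `A i j` with `i ≠ j`, which still dominate `L i j`.
  set e : I ⊕ J → Fin n := Sum.elim (↑) (↑)
  have hblock : ∀ p q, L (e p) (e q) ≤ csBlock A I J p q := by
    have hne : ∀ (a : I) (b : J), (a : Fin n) ≠ b := fun a b h =>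
      Finset.disjoint_left.mp hIJ a.2 (h ▸ b.2)
    rintro (a | b) (a' | b')
    · exact hLA _ _
    · simpa [e, csBlock] using le_neg.mp (hAL _ _ (hne a b'))
    · simpa [e, csBlock] using le_neg.mp (hAL _ _ (hne a' b).symm)
    · exact hLA _ _
  have hoff : ∀ i j, i ≠ j → L i j ≤ 0 := fun i j h => by linarith [hLA i j, hAL i j h]
  set w : Fin n → ℝ := ∑ p, x p • Pi.single (e p) 1
  have hLw : ∀ k, (L *ᵥ w) k = ∑ p, L k (e p) * x p := fun k => by
    rw [Matrix.mulVec_sum, Finset.sum_apply]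
    refine Finset.sum_congr rfl fun p _ => ?_
    rw [Matrix.mulVec_smul, Matrix.mulVec_single_one, Pi.smul_apply, smul_eq_mul, mul_comm]
    rfl
  have hLwe : ∀ p, (L *ᵥ w) (e p) ≤ (csBlock A I J *ᵥ x) p := fun p => by
    rw [hLw]
    exact Finset.sum_le_sum fun q _ => mul_le_mul_of_nonneg_right (hblock p q) (hxpos q).le
  refine ⟨w, fun k => ?_, fun k => ?_, ?_⟩
  · simp only [w, Finset.sum_apply, Pi.smul_apply, smul_eq_mul]
    exact Finset.sum_nonneg fun p _ => mul_nonneg (hxpos p).le (by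
      rw [Pi.single_apply]; split_ifs <;> norm_num)
  · by_cases hk : ∃ p, e p = k
    · obtain ⟨p, rfl⟩ := hk
      exact (hLwe p).trans (hx p)
    · rw [hLw]
      push Not at hk
      exact Finset.sum_nonpos fun p _ =>
        mul_nonpos_of_nonpos_of_nonneg (hoff _ _ (hk p).symm) (hxpos p).le
  · obtain ⟨p, hp⟩ := Function.ne_iff.mp hx0
    exact ⟨e p, (hLwe p).trans_lt ((hx p).lt_of_ne hp)⟩

lemma specRad_le_of_columnSufficient [NeZero n] {M : Matrix (Fin n) (Fin n) ℝ} {s : ℝ}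
    (hM : ∀ i j, 0 ≤ M i j) (hirr : IrreducibleMat M)
    (h : ColumnSufficient (s • (1 : Matrix (Fin n) (Fin n) ℝ) - M)) : specRad M ≤ s := by
  refine not_lt.1 fun hlt => ?_
  obtain ⟨y, hy, hMy⟩ := hirr.exists_pos_lt_mulVec_of_lt_specRad hM hlt
  have hneg : ∀ i, ((s • 1 - M) *ᵥ y) i < 0 := fun i => by
    rw [smul_one_sub_mulVec_apply]; linarith [hMy i]
  exact not_columnSufficient_of_mulVec_nonpos hy (fun i => (hneg i).le)
    (fun h => (hneg 0).ne (congrFun h 0)) h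

lemma columnSufficient_of_specRad_le {N L A : Matrix (Fin n) (Fin n) ℝ} {s : ℝ}
    (hN : ∀ i j, 0 ≤ N i j) (hirr : IrreducibleMat N) (hρ : specRad N ≤ s)
    (hL : L = s • 1 - N) (hLA : ∀ i j, L i j ≤ A i j) (hAL : ∀ i j, i ≠ j → A i j ≤ -L i j) :
    ColumnSufficient A := by
  by_contra hA
  obtain ⟨w, hw, hLw, i₀, hi₀⟩ := exists_nonneg_mulVec_nonpos_of_not_columnSufficient hLA hAL hA
  simp only [hL, smul_one_sub_mulVec_apply, sub_nonpos, sub_neg] at hLw hi₀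
  exact hρ.not_gt (hirr.lt_specRad_of_le_mulVec hN hw hLw ⟨i₀, hi₀⟩)

end

theorem stmt_14 {n : ℕ} (Al Au : Matrix (Fin n) (Fin n) ℝ)
    (hle : ∀ i j, Al i j ≤ Au i j)
    (Ac : Matrix (Fin n) (Fin n) ℝ) (hAc : Ac = (1/2 : ℝ) • (Al + Au)) (Δ : Matrix (Fin n) (Fin n) ℝ) (hΔ : Δ = (1/2 : ℝ) • (Au - Al))
    (hM : IsMMatrix Ac) (hirr : IrreducibleMat Δ) :
    (∀ A : Matrix (Fin n) (Fin n) ℝ, memInterval Al Au A → ColumnSufficient A) ↔ IsM0Matrix Al := by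
  obtain ⟨s₀, N₀, hN₀, hAc₀, hρ₀⟩ := hM
  have hΔnn : ∀ i j, 0 ≤ Δ i j := fun i j => by
    simp only [hΔ, Matrix.smul_apply, Matrix.sub_apply, smul_eq_mul]; linarith [hle i j]
  have hNΔ : ∀ i j, 0 ≤ (N₀ + Δ) i j := fun i j => add_nonneg (hN₀ i j) (hΔnn i j)
  have hAl : Al = s₀ • 1 - (N₀ + Δ) := by rw [← sub_sub, ← hAc₀, hAc, hΔ]; module
  have hAu : Au = s₀ • 1 - (N₀ - Δ) := by rw [← sub_add, ← hAc₀, hAc, hΔ]; module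
  have hirrN : ∀ s N, (∀ i j, 0 ≤ N i j) → Al = s • 1 - N → IrreducibleMat N :=
    fun s N hN hAlN => hirr.mono hΔnn (fun i => hN i i) fun i j hij => by
      have := congrFun (congrFun (hAlN.symm.trans hAl) i) j
      rw [smul_one_sub_apply_of_ne _ hij, smul_one_sub_apply_of_ne _ hij, Matrix.add_apply] at this
      linarith [hN₀ i j]
  constructor
  · intro hCS
    refine ⟨s₀, N₀ + Δ, hNΔ, hAl, ?_⟩
    rcases Nat.eq_zero_or_pos n with rfl | hn
    · exact Subsingleton.elim N₀ (N₀ + Δ) ▸ hρ₀.le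
    have : NeZero n := ⟨hn.ne'⟩
    exact specRad_le_of_columnSufficient hNΔ (hirrN _ _ hNΔ hAl)
      (hAl ▸ hCS Al fun i j => ⟨le_rfl, hle i j⟩)
  · rintro ⟨s, N, hN, hAlN, hρ⟩ A hA
    refine columnSufficient_of_specRad_le hN (hirrN s N hN hAlN) hρ hAlN (fun i j => (hA i j).1)
      fun i j hij => (hA i j).2.trans ?_
    rw [hAu, hAl, smul_one_sub_apply_of_ne _ hij, smul_one_sub_apply_of_ne _ hij]
    simp only [Matrix.add_apply, Matrix.sub_apply]
    linarith [hN₀ i j]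
end
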